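/- Let A and B be commuting bounded linear operators on a complex Hilbert space H with N(A) ⊆ N(A*) and N(B) ⊆ N(B*). Let B' denote the compression of B to N(A)⊥, i.e., B' = P ∘ B restricted to N(A)⊥ where P is the orthogonal projection of H onto N(A)⊥, regarded as a bounded operator on the Hilbert space N(A)⊥. If N(B') ⊆ N(B'*), then N(AB) ⊆ N((AB)*). -/

import Mathlib

/-!
Split `x ∈ N(AB)` as `x = u + v` with `u ∈ N(A)` and `v ∈ N(A)ᗮ`. Since `B` commutes with `A`,
it leaves `N(A)` invariant, so `ABv = 0`, i.e. `Bv ∈ N(A)`, and therefore `B'v = 0`. By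
invariance `B*` leaves `N(A)ᗮ` invariant, and there it agrees with `B'*`; hence
`B*v = B'*v = 0`. Finally `(AB)*x = B*A*v = A*B*v = 0`, using `A*u = 0` and that `A*`, `B*` commute.
-/

open ContinuousLinearMap

theorem ContinuousLinearMap.mem_ker_of_comp_eq_comp {R M : Type*} [Semiring R] [AddCommMonoid M]
    [Module R M] [TopologicalSpace M] {A B : M →L[R] M} (h : A ∘L B = B ∘L A) {w : M}
    (hw : w ∈ LinearMap.ker (A : M →ₗ[R] M)) : B w ∈ LinearMap.ker (A : M →ₗ[R] M) := by
  simp only [LinearMap.mem_ker, coe_coe] at hw ⊢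
  rw [← comp_apply, h, comp_apply, hw, map_zero]

section Compression

variable {𝕜 E : Type*} [RCLike 𝕜] [NormedAddCommGroup E] [InnerProductSpace 𝕜 E]
  {K : Submodule 𝕜 E} {B : E →L[𝕜] E} {B' : Kᗮ →L[𝕜] Kᗮ}

theorem compression_eq_zero_of_apply_mem (hB' : ∀ x : Kᗮ, B x - (B' x : E) ∈ K) {v : Kᗮ}
    (hv : B v ∈ K) : B' v = 0 := by
  have hK : (B' v : E) ∈ K := by simpa using K.sub_mem hv (hB' v)
  exact Subtype.ext ((Submodule.mem_bot 𝕜).mp (K.inf_orthogonal_eq_bot.le ⟨hK, (B' v).2⟩))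

theorem coe_adjoint_compression_apply [CompleteSpace E] (hK : ∀ w ∈ K, B w ∈ K)
    (hB' : ∀ x : Kᗮ, B x - (B' x : E) ∈ K) (v : Kᗮ) : (adjoint B' v : E) = adjoint B v := by
  have hBv : adjoint B v ∈ Kᗮ :=
    orthogonal_mem_invtSubmodule (T := adjoint B) (by rwa [adjoint_adjoint]) v.2
  have hinner (z : Kᗮ) : inner 𝕜 (adjoint B v) (z : E) = inner 𝕜 (adjoint B' v : E) z := by
    rw [adjoint_inner_left, ← Submodule.coe_inner, adjoint_inner_left, Submodule.coe_inner,
      ← sub_eq_zero, ← inner_sub_right]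
    exact Submodule.inner_left_of_mem_orthogonal (hB' z) v.2
  have hperpperp : adjoint B v - adjoint B' v ∈ Kᗮᗮ :=
    Kᗮ.sub_mem_orthogonal_of_inner_left hinner
  have hperp : adjoint B v - adjoint B' v ∈ Kᗮ := Kᗮ.sub_mem hBv (adjoint B' v).2
  exact (sub_eq_zero.mp ((Submodule.mem_bot 𝕜).mp
    (Kᗮ.inf_orthogonal_eq_bot.le ⟨hperp, hperpperp⟩))).symm

end Compression

theorem stmt10 {H : Type*} [NormedAddCommGroup H] [InnerProductSpace ℂ H] [CompleteSpace H]
    (A B : H →L[ℂ] H) (hcomm : A ∘L B = B ∘L A)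
    (hA : LinearMap.ker (A : H →ₗ[ℂ] H) ≤
      LinearMap.ker (ContinuousLinearMap.adjoint A : H →ₗ[ℂ] H))
    (B' : (LinearMap.ker (A : H →ₗ[ℂ] H))ᗮ →L[ℂ] (LinearMap.ker (A : H →ₗ[ℂ] H))ᗮ)
    (hB' : ∀ x : (LinearMap.ker (A : H →ₗ[ℂ] H))ᗮ, B x - (B' x : H) ∈ LinearMap.ker (A : H →ₗ[ℂ] H))
    (hqp : LinearMap.ker (B' :
      (LinearMap.ker (A : H →ₗ[ℂ] H))ᗮ →ₗ[ℂ] (LinearMap.ker (A : H →ₗ[ℂ] H))ᗮ) ≤ LinearMap.ker (ContinuousLinearMap.adjoint B' :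
      (LinearMap.ker (A : H →ₗ[ℂ] H))ᗮ →ₗ[ℂ] (LinearMap.ker (A : H →ₗ[ℂ] H))ᗮ)) :
    LinearMap.ker (A ∘L B : H →ₗ[ℂ] H) ≤ LinearMap.ker (ContinuousLinearMap.adjoint (A ∘L B) : H →ₗ[ℂ] H) := by
  have hinv : ∀ w ∈ LinearMap.ker (A : H →ₗ[ℂ] H), B w ∈ LinearMap.ker (A : H →ₗ[ℂ] H) :=
    fun _ => mem_ker_of_comp_eq_comp hcomm
  intro x hx
  obtain ⟨u, hu, v, hv, rfl⟩ := (LinearMap.ker (A : H →ₗ[ℂ] H)).exists_add_mem_mem_orthogonal x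
  have hBu : A (B u) = 0 := hinv u hu
  have hBv : B v ∈ LinearMap.ker (A : H →ₗ[ℂ] H) := by simpa [hBu] using hx
  have hB'v : B' ⟨v, hv⟩ = 0 := compression_eq_zero_of_apply_mem hB' hBv
  have hBstar : adjoint B v = 0 := by
    have h : adjoint B' ⟨v, hv⟩ = 0 := hqp hB'v
    simpa [coe_adjoint_compression_apply hinv hB'] using congrArg Subtype.val h
  have hAstar_comm : adjoint A (adjoint B v) = adjoint B (adjoint A v) := by
    have h : adjoint A ∘L adjoint B = adjoint B ∘L adjoint A := by
      rw [← adjoint_comp, ← adjoint_comp, hcomm]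
    exact DFunLike.congr_fun h v
  have hAu : adjoint A u = 0 := hA hu
  simp only [LinearMap.mem_ker, coe_coe, adjoint_comp, comp_apply, map_add, hAu, zero_add,
    ← hAstar_comm, hBstar, map_zero]
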